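/- arXiv:2007.04225 — 3 statements merged into one kernel-verified Lean document; each statement's English description precedes it below -/
import Mathlib

section
/- Let e₁ = b₂c₂²+b₃c₃² + (b₂c₂+b₃c₃)(b₁+b₂+b₃+c₃) + a₃₂c₂(c₂-b₁-b₂-b₃) and e₂ = (b₂c₂+b₃c₃)(b₁+b₂+b₃-c₃) + a₃₂c₂(b₁+b₂+b₃-c₂). If the four classical third-order conditions hold (b₁+b₂+b₃=1, b₂c₂+b₃c₃=1/2, b₂c₂²+b₃c₃²=1/3, b₃a₃₂c₂=1/6), then e₁ = 1 and e₂ = 1/3 are each equivalent to the single condition a₃₂c₂(1-c₂) = (3c₃-1)/6. -/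
theorem new_format_order_conditions_reduce
    (a₃₂ b₁ b₂ b₃ c₂ c₃ : ℝ)
    (h1 : b₁ + b₂ + b₃ = 1) (h2 : b₂ * c₂ + b₃ * c₃ = 1/2)
    (h3 : b₂ * c₂^2 + b₃ * c₃^2 = 1/3) (h4 : b₃ * a₃₂ * c₂ = 1/6) :
    (b₂ * c₂^2 + b₃ * c₃^2 + (b₂ * c₂ + b₃ * c₃) * (b₁ + b₂ + b₃ + c₃)
        + a₃₂ * c₂ * (c₂ - b₁ - b₂ - b₃) = 1 ↔
      a₃₂ * c₂ * (1 - c₂) = (3 * c₃ - 1) / 6) ∧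
    ((b₂ * c₂ + b₃ * c₃) * (b₁ + b₂ + b₃ - c₃)
        + a₃₂ * c₂ * (b₁ + b₂ + b₃ - c₂) = 1/3 ↔
      a₃₂ * c₂ * (1 - c₂) = (3 * c₃ - 1) / 6) := by
  constructor
  · constructor <;> intro h <;>
      linear_combination -h + h3 + (b₁ + b₂ + b₃ + c₃) * h2 + (1/2 - a₃₂ * c₂) * h1
  · constructor
    · intro h
      linear_combination h - (b₁ + b₂ + b₃ - c₃) * h2 - (a₃₂ * c₂ + 1/2) * h1
    · intro h
      linear_combination h + (b₁ + b₂ + b₃ - c₃) * h2 + (a₃₂ * c₂ + 1/2) * h1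
end

section
/- For any real a₂₁ ≠ 0 with coefficients of the three-stage third-order family given by c₂ = a₂₁, c₃ a root of the Williamson constraint c₃²(1-c₂)+c₃(c₂²+c₂/2-1)+(1/3-c₂/2)=0 with c₂ ≠ 1, c₃ ∉ {0, c₂}, c₂ ≠ 2/3, and a₃₂, b₂, b₃ defined by the generic-branch formulas a₃₂ = c₃(c₃-c₂)/(c₂(2-3c₂)), b₂ = (3c₃-2)/(6c₂(c₃-c₂)), b₃ = (2-3c₂)/(6c₃(c₃-c₂)), the extra Lie group condition a₃₂c₂(1-c₂) = (3c₃-1)/6 holds. -/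
lemma lie_defect_eq_six_mul_williamson (c₂ c₃ : ℝ) :
    6 * c₃ * (c₃ - c₂) * (1 - c₂) - (3 * c₃ - 1) * (2 - 3 * c₂) =
      6 * (c₃^2 * (1 - c₂) + c₃ * (c₂^2 + c₂/2 - 1) + (1/3 - c₂/2)) := by
  ring

lemma lie_condition_of_williamson {c₂ c₃ : ℝ} (hc0 : c₂ ≠ 0) (hc223 : c₂ ≠ 2/3)
    (hW : c₃^2 * (1 - c₂) + c₃ * (c₂^2 + c₂/2 - 1) + (1/3 - c₂/2) = 0) :
    c₃ * (c₃ - c₂) / (c₂ * (2 - 3 * c₂)) * c₂ * (1 - c₂) = (3 * c₃ - 1) / 6 := by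
  have h23 : 2 - 3 * c₂ ≠ 0 := fun h => hc223 (by linarith)
  have hdefect := lie_defect_eq_six_mul_williamson c₂ c₃
  rw [hW, mul_zero, sub_eq_zero] at hdefect
  have hcancel : c₃ * (c₃ - c₂) / (c₂ * (2 - 3 * c₂)) * c₂ * (1 - c₂) =
      c₃ * (c₃ - c₂) * (1 - c₂) / (2 - 3 * c₂) := by
    field_simp
  rw [hcancel, div_eq_div_iff h23 (by norm_num)]
  linear_combination hdefect

theorem williamson_family_satisfies_lie_condition_general
    (a₂₁ c₂ c₃ : ℝ) (ha : a₂₁ ≠ 0) (hc2 : c₂ = a₂₁)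
    (hW : c₃^2 * (1 - c₂) + c₃ * (c₂^2 + c₂/2 - 1) + (1/3 - c₂/2) = 0)
    (hc223 : c₂ ≠ 2/3)
    (a₃₂ : ℝ)
    (ha32 : a₃₂ = c₃ * (c₃ - c₂) / (c₂ * (2 - 3 * c₂))) :
    a₃₂ * c₂ * (1 - c₂) = (3 * c₃ - 1) / 6 := by
  subst ha32
  exact lie_condition_of_williamson (hc2 ▸ ha) hc223 hW

theorem williamson_family_satisfies_lie_condition
    (a₂₁ c₂ c₃ : ℝ) (ha : a₂₁ ≠ 0) (hc2 : c₂ = a₂₁)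
    (hW : c₃^2 * (1 - c₂) + c₃ * (c₂^2 + c₂/2 - 1) + (1/3 - c₂/2) = 0)
    (hc1 : c₂ ≠ 1) (hc30 : c₃ ≠ 0) (hc32 : c₃ ≠ c₂) (hc223 : c₂ ≠ 2/3)
    (a₃₂ b₂ b₃ : ℝ)
    (ha32 : a₃₂ = c₃ * (c₃ - c₂) / (c₂ * (2 - 3 * c₂)))
    (hb2 : b₂ = (3 * c₃ - 2) / (6 * c₂ * (c₃ - c₂)))
    (hb3 : b₃ = (2 - 3 * c₂) / (6 * c₃ * (c₃ - c₂))) :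
    a₃₂ * c₂ * (1 - c₂) = (3 * c₃ - 1) / 6 :=
  williamson_family_satisfies_lie_condition_general a₂₁ c₂ c₃ ha hc2 hW hc223 a₃₂ ha32
end

section
/- A single step of the 2N-storage Lie group scheme ΔYᵢ = AᵢΔYᵢ₋₁ + hA(Yᵢ₋₁), Yᵢ = exp(BᵢΔYᵢ)Yᵢ₋₁ (i=1,...,s, with A₁=0, Y₀ = Yₜ) applied to dY/dt = A(Y)Y with A(Y) ∈ 𝔤 for all Y, where G is a matrix Lie group with Lie algebra 𝔤 and Yₜ ∈ G, produces Yₛ ∈ G. That is, each stage value Yᵢ lies in G. -/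
open Matrix

theorem Submodule.mem_of_smul_add_recurrence {R M : Type*} [Semiring R] [AddCommMonoid M]
    [Module R M] (p : Submodule R M) (a : ℕ → R) (u v : ℕ → M) (h₀ : u 0 ∈ p)
    (hv : ∀ i, v i ∈ p) (hu : ∀ i, u (i + 1) = a i • u i + v i) (i : ℕ) : u i ∈ p := by
  induction i with
  | zero => exact h₀
  | succ k ih => exact hu k ▸ p.add_mem (p.smul_mem _ ih) (hv k)

theorem Set.mem_of_mul_left_recurrence {M : Type*} [Mul M] (S : Set M)
    (hmul : ∀ x ∈ S, ∀ y ∈ S, x * y ∈ S) (g x : ℕ → M) (h₀ : x 0 ∈ S)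
    (hg : ∀ i, g i ∈ S) (hx : ∀ i, x (i + 1) = g i * x i) (i : ℕ) : x i ∈ S := by
  induction i with
  | zero => exact h₀
  | succ k ih => exact hx k ▸ hmul _ (hg k) _ ih

theorem low_storage_scheme_stays_in_group_general
    {n : ℕ} (G : Set (Matrix (Fin n) (Fin n) ℝ))
    (𝔤 : Submodule ℝ (Matrix (Fin n) (Fin n) ℝ))
    (hexp : ∀ X ∈ 𝔤, NormedSpace.exp X ∈ G)
    (hmul : ∀ X ∈ G, ∀ Y ∈ G, X * Y ∈ G)
    (A : Matrix (Fin n) (Fin n) ℝ → Matrix (Fin n) (Fin n) ℝ)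
    (hA : ∀ Y, A Y ∈ 𝔤)
    (h : ℝ) (s : ℕ) (Ac Bc : ℕ → ℝ)
    (Yt : Matrix (Fin n) (Fin n) ℝ) (hYt : Yt ∈ G)
    (Y ΔY : ℕ → Matrix (Fin n) (Fin n) ℝ)
    (hY0 : Y 0 = Yt) (hΔY0 : ΔY 0 = 0)
    (hΔ : ∀ i, ΔY (i + 1) = Ac (i + 1) • ΔY i + h • A (Y i))
    (hYstep : ∀ i, Y (i + 1) = NormedSpace.exp (Bc (i + 1) • ΔY (i + 1)) * Y i) :
    (∀ i, i ≤ s → Y i ∈ G) ∧ Y s ∈ G := by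
  have hΔY : ∀ i, ΔY i ∈ 𝔤 :=
    𝔤.mem_of_smul_add_recurrence (fun i ↦ Ac (i + 1)) ΔY (fun i ↦ h • A (Y i))
      (hΔY0 ▸ 𝔤.zero_mem) (fun i ↦ 𝔤.smul_mem h (hA (Y i))) hΔ
  have hY : ∀ i, Y i ∈ G :=
    G.mem_of_mul_left_recurrence hmul (fun i ↦ NormedSpace.exp (Bc (i + 1) • ΔY (i + 1))) Y
      (hY0 ▸ hYt) (fun i ↦ hexp _ (𝔤.smul_mem _ (hΔY (i + 1)))) hYstep
  exact ⟨fun i _ ↦ hY i, hY s⟩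

theorem low_storage_scheme_stays_in_group
    {n : ℕ} (G : Set (Matrix (Fin n) (Fin n) ℝ))
    (𝔤 : Submodule ℝ (Matrix (Fin n) (Fin n) ℝ))
    (hexp : ∀ X ∈ 𝔤, NormedSpace.exp X ∈ G)
    (hmul : ∀ X ∈ G, ∀ Y ∈ G, X * Y ∈ G)
    (A : Matrix (Fin n) (Fin n) ℝ → Matrix (Fin n) (Fin n) ℝ)
    (hA : ∀ Y, A Y ∈ 𝔤)
    (h : ℝ) (s : ℕ) (Ac Bc : ℕ → ℝ) (hA1 : Ac 1 = 0)
    (Yt : Matrix (Fin n) (Fin n) ℝ) (hYt : Yt ∈ G)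
    (Y ΔY : ℕ → Matrix (Fin n) (Fin n) ℝ)
    (hY0 : Y 0 = Yt) (hΔY0 : ΔY 0 = 0)
    (hΔ : ∀ i, ΔY (i + 1) = Ac (i + 1) • ΔY i + h • A (Y i))
    (hYstep : ∀ i, Y (i + 1) = NormedSpace.exp (Bc (i + 1) • ΔY (i + 1)) * Y i) :
    (∀ i, i ≤ s → Y i ∈ G) ∧ Y s ∈ G :=
  low_storage_scheme_stays_in_group_general G 𝔤 hexp hmul A hA h s Ac Bc Yt hYt Y ΔY hY0 hΔY0 hΔ
    hYstep
end
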